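/- arXiv:1404.3391 — 7 statements merged into one kernel-verified Lean document; each statement's English description precedes it below -/
import Mathlib

section
/- Let k ≥ 1 and n ≥ 1, and let A = (a_{i,j}) be a k×n Boolean matrix, with rows indexed by i ∈ {0,...,k-1} and columns indexed by j ∈ {0,...,n-1}. Then there exists a permutation π of {0,...,n-1} such that for every i ∈ {0,...,k-1}, the i-th row of the matrix A^π (defined by a^π_{i,j} = a_{i,π(j)}) is composed of at most 2^i + 1 runs; moreover, if the i-th row of A^π is composed of exactly 2^i + 1 runs, then its first run is a run of 0s. -/
/-!
Sort the columns by their rank in the reflected binary Gray code on `k` bits, row `i` being bit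
`k - 1 - i` of the code. Bit `d` of the Gray code of `v` is the parity of `v / 2 ^ (d + 1)` rounded
to the nearest integer; this rounded quotient is monotone in `v`, vanishes at `v = 0` and is at most
`2 ^ i` for `v < 2 ^ k` when `d = k - 1 - i`. Along the sorted columns it is therefore monotone,
so row `i`, preceded by a virtual `0`, changes value at most `2 ^ i` times, which is exactly the
claim about its runs.
-/

/-- The number of runs (maximal blocks of consecutive equal bits) of a binary string,
viewed as a list of booleans. For a nonempty string it equals 1 plus the number of
adjacent mismatching positions; the empty string has 0 runs. -/
def runCount (l : List Bool) : ℕ :=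
  if l.isEmpty then 0 else 1 + (l.zip l.tail).countP fun p => p.1 != p.2

section FlipCount

variable {α β : Type*} [DecidableEq α] [DecidableEq β]

def flipCount : List α → ℕ
  | a :: b :: t => (if a = b then 0 else 1) + flipCount (b :: t)
  | _ => 0

@[simp]
lemma flipCount_cons_cons (a b : α) (t : List α) :
    flipCount (a :: b :: t) = (if a = b then 0 else 1) + flipCount (b :: t) := rfl

lemma flipCount_map_le (f : α → β) : ∀ l : List α, flipCount (l.map f) ≤ flipCount l
  | [] | [_] => le_rfl
  | a :: b :: t => by
    have := flipCount_map_le f (b :: t)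
    simp only [List.map_cons, flipCount_cons_cons] at *
    rcases eq_or_ne a b with rfl | hab
    · simpa using this
    · split_ifs <;> omega

end FlipCount

lemma flipCount_le_sub_of_isChain {N : ℕ} :
    ∀ {a : ℕ} {l : List ℕ}, (a :: l).IsChain (· ≤ ·) → (∀ x ∈ l, x ≤ N) →
      flipCount (a :: l) ≤ N - a
  | _, [], _, _ => Nat.zero_le _
  | a, b :: t, hchain, hle => by
    rw [List.isChain_cons_cons] at hchain
    have ih := flipCount_le_sub_of_isChain hchain.2 fun x hx => hle x (List.mem_cons_of_mem _ hx)
    have hb := hle b List.mem_cons_self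
    rw [flipCount_cons_cons]
    split_ifs with hab <;> omega

lemma countP_zip_tail_eq_flipCount :
    ∀ l : List Bool, (l.zip l.tail).countP (fun p => p.1 != p.2) = flipCount l
  | [] | [_] => rfl
  | a :: b :: t => by
    rw [flipCount_cons_cons, ← countP_zip_tail_eq_flipCount (b :: t)]
    cases a <;> cases b <;> simp <;> omega

lemma runCount_le_of_flipCount_false_cons {l : List Bool} (hl : l ≠ []) {m : ℕ}
    (h : flipCount (false :: l) ≤ m) :
    runCount l ≤ m + 1 ∧ (runCount l = m + 1 → l.head hl = false) := by
  obtain ⟨b, t, rfl⟩ := List.exists_cons_of_ne_nil hl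
  have hrun : runCount (b :: t) = flipCount (b :: t) + 1 := by
    rw [runCount, countP_zip_tail_eq_flipCount]
    simp [Nat.add_comm]
  rw [flipCount_cons_cons] at h
  rw [hrun, List.head_cons]
  cases b <;> simp at h ⊢ <;> omega

/-- `(grayLevel d v).bodd` is bit `d` of the Gray code `v ^^^ (v >>> 1)`. -/
def grayLevel (d v : ℕ) : ℕ := (v + 2 ^ d) / 2 ^ (d + 1)

lemma grayLevel_mono (d : ℕ) : Monotone (grayLevel d) :=
  fun _ _ h => Nat.div_le_div_right (Nat.add_le_add_right h _)

lemma grayLevel_zero_right (d : ℕ) : grayLevel d 0 = 0 :=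
  Nat.div_eq_of_lt (by rw [zero_add, pow_succ]; have := Nat.two_pow_pos d; omega)

lemma grayLevel_le_two_pow {d i v : ℕ} (hv : v < 2 ^ (d + 1 + i)) : grayLevel d v ≤ 2 ^ i := by
  rw [grayLevel, Nat.lt_succ_iff.symm, Nat.div_lt_iff_lt_mul (Nat.two_pow_pos _)]
  rw [pow_add, pow_succ] at hv
  rw [pow_succ]
  have := Nat.two_pow_pos d
  nlinarith

lemma grayLevel_succ_two_mul_add (d v : ℕ) {e : ℕ} (he : e < 2) :
    grayLevel (d + 1) (2 * v + e) = grayLevel d v := by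
  rw [grayLevel, grayLevel, pow_succ 2 (d + 1), mul_comm _ 2, ← Nat.div_div_eq_div_mul, pow_succ]
  congr 1
  omega

lemma grayLevel_zero_two_mul_add (v : ℕ) {e : ℕ} (he : e < 2) :
    grayLevel 0 (2 * v + e) = v + e := by
  simp only [grayLevel, pow_zero, zero_add, pow_one]
  omega

lemma exists_grayLevel_bodd_eq (b : ℕ → Bool) :
    ∀ k, ∃ v < 2 ^ k, ∀ i < k, (grayLevel (k - 1 - i) v).bodd = b i
  | 0 => ⟨0, Nat.two_pow_pos 0, fun _ hi => absurd hi (Nat.not_lt_zero _)⟩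
  | k + 1 => by
    obtain ⟨v, hv, hbits⟩ := exists_grayLevel_bodd_eq b k
    have he : (xor (b k) v.bodd).toNat < 2 := Bool.toNat_lt _
    refine ⟨2 * v + (xor (b k) v.bodd).toNat, by rw [pow_succ]; omega, fun i hi => ?_⟩
    rcases Nat.lt_succ_iff_lt_or_eq.1 hi with hi | rfl
    · rw [show k + 1 - 1 - i = k - 1 - i + 1 by omega, grayLevel_succ_two_mul_add _ _ he, hbits i hi]
    · rw [show i + 1 - 1 - i = 0 by omega, grayLevel_zero_two_mul_add _ he, Nat.bodd_add]
      cases b i <;> cases v.bodd <;> rfl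

lemma flipCount_false_cons_map_grayLevel_bodd_le {d i : ℕ} {l : List ℕ}
    (hl : l.IsChain (· ≤ ·)) (hlt : ∀ v ∈ l, v < 2 ^ (d + 1 + i)) :
    flipCount (false :: l.map fun v => (grayLevel d v).bodd) ≤ 2 ^ i := by
  have hchain : ((0 :: l).map (grayLevel d)).IsChain (· ≤ ·) :=
    List.isChain_map_of_isChain _ (fun _ _ h => grayLevel_mono d h)
      (List.isChain_cons.2 ⟨fun _ _ => Nat.zero_le _, hl⟩)
  calc flipCount (false :: l.map fun v => (grayLevel d v).bodd)
      = flipCount (((0 :: l).map (grayLevel d)).map Nat.bodd) := by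
        simp [grayLevel_zero_right, Function.comp_def]
    _ ≤ flipCount ((0 :: l).map (grayLevel d)) := flipCount_map_le _ _
    _ ≤ 2 ^ i - grayLevel d 0 := by
        refine flipCount_le_sub_of_isChain hchain fun x hx => ?_
        obtain ⟨v, hv, rfl⟩ := List.mem_map.1 hx
        exact grayLevel_le_two_pow (hlt v hv)
    _ = 2 ^ i := by rw [grayLevel_zero_right, Nat.sub_zero]

theorem stmt0_general (k n : ℕ) (hn : 1 ≤ n)
    (A : Fin k → Fin n → Bool) :
    ∃ π : Equiv.Perm (Fin n),
      ∀ i : Fin k,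
        runCount (List.ofFn fun j => A i (π j)) ≤ 2 ^ (i : ℕ) + 1 ∧
        (runCount (List.ofFn fun j => A i (π j)) = 2 ^ (i : ℕ) + 1 →
          A i (π ⟨0, hn⟩) = false) := by
  choose key hkey_lt hkey using fun j : Fin n =>
    exists_grayLevel_bodd_eq (fun t => if h : t < k then A ⟨t, h⟩ j else false) k
  refine ⟨Tuple.sort key, fun i => ?_⟩
  have hrow : (List.ofFn fun j => A i (Tuple.sort key j)) =
      (List.ofFn (key ∘ Tuple.sort key)).map fun v => (grayLevel (k - 1 - i) v).bodd := by
    simp [List.map_ofFn, Function.comp_def, hkey _ i i.is_lt]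
  have hsorted : (List.ofFn (key ∘ Tuple.sort key)).IsChain (· ≤ ·) :=
    (List.pairwise_ofFn.2 fun _ _ h => Tuple.monotone_sort key h.le).isChain
  have hflip : flipCount (false :: List.ofFn fun j => A i (Tuple.sort key j)) ≤ 2 ^ (i : ℕ) := by
    rw [hrow]
    refine flipCount_false_cons_map_grayLevel_bodd_le hsorted fun v hv => ?_
    obtain ⟨j, rfl⟩ := List.mem_ofFn.1 hv
    rw [show k - 1 - i + 1 + i = k by omega]
    exact hkey_lt _
  obtain ⟨hle, hhead⟩ :=
    runCount_le_of_flipCount_false_cons (by rw [ne_eq, List.ofFn_eq_nil_iff]; omega) hflip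
  exact ⟨hle, fun h => by simpa [List.head_ofFn] using hhead h⟩

theorem stmt0 (k n : ℕ) (hk : 1 ≤ k) (hn : 1 ≤ n)
    (A : Fin k → Fin n → Bool) :
    ∃ π : Equiv.Perm (Fin n),
      ∀ i : Fin k,
        runCount (List.ofFn fun j => A i (π j)) ≤ 2 ^ (i : ℕ) + 1 ∧
        (runCount (List.ofFn fun j => A i (π j)) = 2 ^ (i : ℕ) + 1 →
          A i (π ⟨0, hn⟩) = false) :=
  stmt0_general k n hn A
end

section
/- Let n ≥ 2 and 1 ≤ k ≤ log₂ n (i.e., 2^k ≤ n), and for i ∈ {0,...,k-1} set ℓ_i = ⌈log₂(2·∑_{j=0}^{2^i} C(n-k-1, j))⌉. Then there exists a decoding function D : {0,...,k-1} × {0,1}* × {0,...,n-k-1} → {0,1} such that for every k×(n-k) Boolean matrix A = (a_{i,j}) there exist a permutation π of {0,...,n-k-1} and binary strings w_0, ..., w_{k-1}, where w_i has length exactly ℓ_i, satisfying D(i, w_i, j) = a_{i, π(j)} for all i ∈ {0,...,k-1} and j ∈ {0,...,n-k-1}. (In other words, every (k, n-k)-bipartite graph can be encoded by permuting the right-side vertices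 and assigning the i-th left vertex an ℓ_i-bit tag, so that adjacency is determined from the left vertex's index and tag together with the right vertex's index alone.) -/
/-!
Give each column of `A` the number `r < 2 ^ k` whose reflected Gray code is that column (row `i`
read as Gray bit `k - 1 - i`), and let `π` sort the columns by this number. Gray bit `p` flips
only `2 ^ (k - 1 - p)` times as `r` runs through `[0, 2 ^ k)`, so along a monotone sequence of
Gray ranks row `i` switches value at most `2 ^ i` times. A Boolean row of length `n - k` is
determined by its first entry and its set of switch positions, so there are at most
`2 * ∑ j ≤ 2 ^ i, C(n - k - 1, j)` such rows, and an `ℓ_i`-bit tag can index them.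
-/

open Finset

/-- Bit `p` of the reflected Gray code `r ^^^ (r >>> 1)` of `r`. -/
def grayBit (p r : ℕ) : Bool := r.testBit p ^^ r.testBit (p + 1)

theorem grayBit_eq_testBit_div (p r : ℕ) :
    grayBit p r = ((r + 2 ^ p) / 2 ^ (p + 1)).testBit 0 := by
  have hdiv : (r + 2 ^ p) / 2 ^ (p + 1) = (r / 2 ^ p + 1) / 2 := by
    rw [pow_succ, ← Nat.div_div_eq_div_mul, Nat.add_div_right _ (by positivity)]
  have hp : r.testBit p = (r / 2 ^ p).testBit 0 := by
    rw [Nat.testBit_div_two_pow, zero_add]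
  have hp₁ : r.testBit (p + 1) = (r / 2 ^ p / 2).testBit 0 := by
    rw [Nat.div_div_eq_div_mul, ← pow_succ, Nat.testBit_div_two_pow, zero_add]
  rw [grayBit, hdiv, hp, hp₁]
  generalize r / 2 ^ p = u
  simp only [Nat.testBit_zero]
  rcases Nat.mod_two_eq_zero_or_one u with hu | hu <;>
    rcases Nat.mod_two_eq_zero_or_one (u / 2) with hv | hv <;>
    simp [hu, hv] <;> omega

theorem two_pow_succ_dvd_of_grayBit_ne {p t : ℕ} (h : grayBit p t ≠ grayBit p (t + 1)) :
    2 ^ (p + 1) ∣ t + 1 + 2 ^ p := by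
  by_contra hdvd
  rw [grayBit_eq_testBit_div, grayBit_eq_testBit_div, add_right_comm t 1, Nat.succ_div,
    if_neg (by rwa [add_right_comm]), add_zero] at h
  exact h rfl

theorem card_grayBit_switches_le (p N : ℕ) :
    #{t ∈ range N | grayBit p t ≠ grayBit p (t + 1)} ≤ (N + 2 ^ p) / 2 ^ (p + 1) := by
  rw [← Nat.Ioc_filter_dvd_card_eq_div]
  refine card_le_card_of_injOn (· + 1 + 2 ^ p) (fun t ht => ?_)
    (fun a _ b _ h => by simpa using h)
  simp only [coe_filter, mem_range, Set.mem_ofPred_eq, mem_Ioc] at ht ⊢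
  exact ⟨⟨by positivity, by omega⟩, two_pow_succ_dvd_of_grayBit_ne ht.2⟩

theorem exists_grayBit_eq (k : ℕ) (c : Fin k → Bool) :
    ∃ r < 2 ^ k, ∀ p : Fin k, grayBit p r = c p := by
  induction k with
  | zero => exact ⟨0, by simp, fun p => p.elim0⟩
  | succ k ih =>
    obtain ⟨r, hr, hc⟩ := ih (fun p => c p.succ)
    refine ⟨Nat.bit (c 0 ^^ r.testBit 0) r, Nat.bit_lt_two_pow_succ_iff.2 hr,
      Fin.cases ?_ fun p => ?_⟩
    · simp only [grayBit, Fin.val_zero, zero_add, Nat.testBit_bit_zero, Nat.testBit_bit_succ,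
        Bool.xor_assoc, Bool.xor_self, Bool.xor_false]
    · simpa [grayBit, Nat.testBit_bit_succ] using hc p

def switches {m : ℕ} (f : Fin (m + 1) → Bool) : Finset (Fin m) :=
  {t | f t.castSucc ≠ f t.succ}

theorem apply_succ_eq_xor_mem_switches {m : ℕ} (f : Fin (m + 1) → Bool) (t : Fin m) :
    f t.succ = (f t.castSucc ^^ decide (t ∈ switches f)) := by
  cases h₀ : f t.castSucc <;> cases h₁ : f t.succ <;> simp [switches, h₀, h₁]

theorem eq_of_switches_eq {m : ℕ} {f g : Fin (m + 1) → Bool} (h₀ : f 0 = g 0)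
    (h : switches f = switches g) : f = g := by
  funext t
  induction t using Fin.induction with
  | zero => exact h₀
  | succ t ih => rw [apply_succ_eq_xor_mem_switches f, apply_succ_eq_xor_mem_switches g, ih, h]

theorem card_filter_card_le (α : Type*) [Fintype α] (s : ℕ) :
    #{S : Finset α | #S ≤ s} = ∑ j ∈ range (s + 1), (Fintype.card α).choose j := by
  classical
  rw [card_eq_sum_card_fiberwise (f := Finset.card) (t := range (s + 1))
    (fun S hS => by simpa [Nat.lt_succ_iff] using hS)]
  refine sum_congr rfl fun j hj => ?_
  rw [← card_univ, ← card_powersetCard, powersetCard_eq_filter, filter_filter, powerset_univ]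
  congr 1
  refine filter_congr fun S _ => ?_
  simp only [mem_range] at hj
  constructor <;> rintro ⟨_, rfl⟩ <;> omega

theorem card_filter_card_switches_le (m s : ℕ) :
    #{f : Fin (m + 1) → Bool | #(switches f) ≤ s} ≤ 2 * ∑ j ∈ range (s + 1), m.choose j :=
  calc _ ≤ #((univ : Finset Bool) ×ˢ ({S | #S ≤ s} : Finset (Finset (Fin m)))) :=
        card_le_card_of_injOn (fun f => (f 0, switches f)) (fun f hf => by simpa using hf)
          (fun f _ g _ h => eq_of_switches_eq (Prod.ext_iff.1 h).1 (Prod.ext_iff.1 h).2)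
    _ = 2 * ∑ j ∈ range (s + 1), m.choose j := by
        rw [card_product, card_filter_card_le]; simp

theorem exists_ne_succ_of_ne {g : ℕ → Bool} {a b : ℕ} (hab : a ≤ b) (h : g a ≠ g b) :
    ∃ u ∈ Ico a b, g u ≠ g (u + 1) := by
  induction b, hab using Nat.le_induction with
  | base => exact absurd rfl h
  | succ b hab ih =>
    by_cases hb : g b = g (b + 1)
    · obtain ⟨u, hu, hne⟩ := ih (hb ▸ h)
      exact ⟨u, by simp only [mem_Ico] at hu ⊢; omega, hne⟩
    · exact ⟨b, by simp only [mem_Ico]; omega, hb⟩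

theorem card_switches_comp_le {m N : ℕ} (g : ℕ → Bool) {s : Fin (m + 1) → ℕ} (hs : Monotone s)
    (hN : s (Fin.last m) ≤ N) : #(switches (g ∘ s)) ≤ #{u ∈ range N | g u ≠ g (u + 1)} := by
  have hex : ∀ t ∈ switches (g ∘ s), ∃ u ∈ Ico (s t.castSucc) (s t.succ), g u ≠ g (u + 1) :=
    fun t ht => exists_ne_succ_of_ne (hs t.castSucc_le_succ) (by simpa [switches] using ht)
  choose! φ hφ hφg using hex
  have hφ_lt : ∀ t₁ ∈ switches (g ∘ s), ∀ t₂ ∈ switches (g ∘ s), t₁ < t₂ → φ t₁ < φ t₂ :=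
    fun t₁ h₁ t₂ h₂ h => calc
      φ t₁ < s t₁.succ := (mem_Ico.1 (hφ t₁ h₁)).2
      _ ≤ s t₂.castSucc := hs (Fin.succ_le_castSucc_iff.2 h)
      _ ≤ φ t₂ := (mem_Ico.1 (hφ t₂ h₂)).1
  refine card_le_card_of_injOn φ (fun t ht => ?_) (fun t₁ h₁ t₂ h₂ he => ?_)
  · have hlast := hs (Fin.le_last t.succ)
    have := mem_Ico.1 (hφ t ht)
    simpa [hφg t ht] using (show φ t < N by omega)
  · by_contra hne
    rcases lt_or_gt_of_ne hne with h | h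
    · exact (hφ_lt t₁ h₁ t₂ h₂ h).ne he
    · exact (hφ_lt t₂ h₂ t₁ h₁ h).ne he.symm

theorem add_two_pow_div_two_pow_succ {i p k : ℕ} (h : i + p + 1 = k) :
    (2 ^ k + 2 ^ p) / 2 ^ (p + 1) = 2 ^ i := by
  rw [← h, add_assoc, pow_add, mul_comm, Nat.mul_add_div (by positivity),
    Nat.div_eq_of_lt (Nat.pow_lt_pow_succ one_lt_two), add_zero]

theorem exists_perm_card_switches_le {k m : ℕ} (A : Fin k → Fin (m + 1) → Bool) :
    ∃ π : Equiv.Perm (Fin (m + 1)), ∀ i, #(switches fun j => A i (π j)) ≤ 2 ^ (i : ℕ) := by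
  choose κ hκ hκA using fun j => exists_grayBit_eq k (fun p => A p.rev j)
  refine ⟨Tuple.sort κ, fun i => ?_⟩
  have hrow : (fun j => A i (Tuple.sort κ j)) = grayBit i.rev ∘ κ ∘ Tuple.sort κ := by
    funext j
    simp only [Function.comp_apply, hκA, Fin.rev_rev]
  calc #(switches fun j => A i (Tuple.sort κ j))
      ≤ #{u ∈ range (2 ^ k) | grayBit i.rev u ≠ grayBit i.rev (u + 1)} := by
        rw [hrow]
        exact card_switches_comp_le _ (Tuple.monotone_sort κ) (hκ _).le
    _ ≤ (2 ^ k + 2 ^ (i.rev : ℕ)) / 2 ^ ((i.rev : ℕ) + 1) := card_grayBit_switches_le _ _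
    _ = 2 ^ (i : ℕ) := add_two_pow_div_two_pow_succ (by rw [Fin.val_rev]; omega)

theorem exists_decode_encode {α : Type*} [Nonempty α] (S : Finset α) {L : ℕ} (hS : #S ≤ 2 ^ L) :
    ∃ (enc : α → List Bool) (dec : List Bool → α),
      ∀ x ∈ S, (enc x).length = L ∧ dec (enc x) = x := by
  classical
  obtain ⟨ι⟩ : Nonempty (S ↪ List.Vector Bool L) :=
    Function.Embedding.nonempty_of_card_le (by simpa using hS)
  let enc : α → List Bool := fun x => if hx : x ∈ S then (ι ⟨x, hx⟩).toList else []
  have hinj : Set.InjOn enc S := fun x hx y hy h => by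
    simp only [enc, dif_pos (mem_coe.1 hx), dif_pos (mem_coe.1 hy)] at h
    exact congrArg Subtype.val (ι.injective (List.Vector.toList_injective h))
  exact ⟨enc, Function.invFunOn enc S, fun x hx => ⟨by simp [enc, hx], hinj.leftInvOn_invFunOn hx⟩⟩

theorem exists_adjacency_decoder (k m : ℕ) :
    ∃ D : Fin k → List Bool → Fin (m + 1) → Bool,
      ∀ A : Fin k → Fin (m + 1) → Bool,
        ∃ (π : Equiv.Perm (Fin (m + 1))) (w : Fin k → List Bool),
          (∀ i : Fin k, (w i).length =
            Nat.clog 2 (2 * ∑ j ∈ range (2 ^ (i : ℕ) + 1), m.choose j)) ∧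
          ∀ (i : Fin k) (j : Fin (m + 1)), D i (w i) j = A i (π j) := by
  have hcard (i : Fin k) : #{f : Fin (m + 1) → Bool | #(switches f) ≤ 2 ^ (i : ℕ)} ≤
      2 ^ Nat.clog 2 (2 * ∑ j ∈ range (2 ^ (i : ℕ) + 1), m.choose j) :=
    (card_filter_card_switches_le m _).trans (Nat.le_pow_clog one_lt_two _)
  choose enc dec hdec using fun i => exists_decode_encode _ (hcard i)
  refine ⟨dec, fun A => ?_⟩
  obtain ⟨π, hπ⟩ := exists_perm_card_switches_le A
  have hrow (i : Fin k) := hdec i (fun j => A i (π j)) (by simpa using hπ i)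
  exact ⟨π, fun i => enc i fun j => A i (π j), fun i => (hrow i).1,
    fun i j => congrFun (hrow i).2 j⟩

theorem stmt2_general (n k : ℕ) :
    ∃ D : Fin k → List Bool → Fin (n - k) → Bool,
      ∀ A : Fin k → Fin (n - k) → Bool,
        ∃ (π : Equiv.Perm (Fin (n - k))) (w : Fin k → List Bool),
          (∀ i : Fin k,
            (w i).length =
              Nat.clog 2 (2 * ∑ j ∈ Finset.range (2 ^ (i : ℕ) + 1),
                Nat.choose (n - k - 1) j)) ∧
          ∀ (i : Fin k) (j : Fin (n - k)), D i (w i) j = A i (π j) := by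
  generalize n - k = M
  cases M with
  | zero =>
    exact ⟨fun _ _ j => j.elim0, fun _ => ⟨1, fun _ => List.replicate _ false,
      fun _ => List.length_replicate, fun _ j => j.elim0⟩⟩
  | succ m => exact exists_adjacency_decoder k m

theorem stmt2 (n k : ℕ) (hn : 2 ≤ n) (hk : 1 ≤ k) (hkn : 2 ^ k ≤ n) :
    ∃ D : Fin k → List Bool → Fin (n - k) → Bool,
      ∀ A : Fin k → Fin (n - k) → Bool,
        ∃ (π : Equiv.Perm (Fin (n - k))) (w : Fin k → List Bool),
          (∀ i : Fin k,
            (w i).length =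
              Nat.clog 2 (2 * ∑ j ∈ Finset.range (2 ^ (i : ℕ) + 1),
                Nat.choose (n - k - 1) j)) ∧
          ∀ (i : Fin k) (j : Fin (n - k)), D i (w i) j = A i (π j) :=
  stmt2_general n k
end

section
/- Let k ≥ 1 and m ≥ 1, and let ℓ_0, ..., ℓ_{k-1} be integers with 0 ≤ ℓ_i ≤ m for every i. Set L = ⌈(∑_{i=0}^{k-1} ℓ_i)/m⌉. Then there exists a decoding function D such that for every k×m Boolean matrix A = (a_{i,j}) there exist binary strings x_0, ..., x_{k-1} and y_0, ..., y_{m-1}, where x_i has length exactly m - ℓ_i and every y_j has length exactly L, satisfying D(i, x_i, j, y_j) = a_{i,j} for all i ∈ {0,...,k-1} and j ∈ {0,...,m-1}. -/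
/-!
Concatenate the blocks of `ℓ i` "deferred" entries of the rows into one word of length
`N = ∑ i, ℓ i` and write it column by column into `m` columns, so position `t` lands in slot
`t / m` of column `t mod m`; every column then needs only `⌈N / m⌉` slots. Row `i` owns the
positions `s i + o` with `o < ℓ i`, where `s i` is the start of its block; since these positions
are consecutive, row `i` can defer the entry of column `j` at the cyclic offset `o = j - s i`
(mod `m`) exactly when `o < ℓ i`. Its other `m - ℓ i` entries, those with `ℓ i ≤ o`, are stored
in `x i` in order of offset. The decoder knows `ℓ`, hence `s i` and `o`, and reads the right slot.
-/

open Fin.NatCast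

namespace BipartiteLabeling

lemma div_lt_add_sub_one_div {t N m : ℕ} (hm : 0 < m) (ht : t < N) : t / m < (N + m - 1) / m := by
  rw [Nat.lt_div_iff_mul_lt hm]
  have := Nat.div_mul_le_self t m
  omega

variable {α : Type*} [Inhabited α] {k m : ℕ} [NeZero m] (ℓ : Fin k → ℕ)

def blockStart (i : Fin k) : ℕ := ∑ i' : Fin i, ℓ (Fin.castLE i.2.le i')

lemma finSigmaFinEquiv_apply_eq_blockStart_add (i : Fin k) (o : Fin (ℓ i)) :
    (finSigmaFinEquiv ⟨i, o⟩ : ℕ) = blockStart ℓ i + o :=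
  finSigmaFinEquiv_apply _

def offset (i : Fin k) (j : Fin m) : ℕ := (j - (blockStart ℓ i : Fin m)).val

lemma offset_lt (i : Fin k) (j : Fin m) : offset ℓ i j < m := Fin.isLt _

lemma cast_blockStart_add_offset (i : Fin k) (j : Fin m) :
    ((blockStart ℓ i + offset ℓ i j : ℕ) : Fin m) = j := by
  rw [offset, Nat.cast_add, Fin.cast_val_eq_self, add_sub_cancel]

def decode (i : Fin k) (x : List α) (j : Fin m) (y : List α) : α :=
  if offset ℓ i j < ℓ i then y.getD ((blockStart ℓ i + offset ℓ i j) / m) default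
  else x.getD (offset ℓ i j - ℓ i) default

variable (A : Fin k → Fin m → α)

def rowCode (i : Fin k) : List α :=
  List.ofFn fun r : Fin (m - ℓ i) => A i (blockStart ℓ i + (ℓ i + r) : ℕ)

def deferredEntry (t : ℕ) : α :=
  if h : t < ∑ i, ℓ i then A (finSigmaFinEquiv.symm ⟨t, h⟩).1 (t : Fin m) else default

def columnCode (j : Fin m) : List α :=
  List.ofFn fun r : Fin ((∑ i, ℓ i + m - 1) / m) => deferredEntry ℓ A (m * r + j)

lemma deferredEntry_blockStart_add (i : Fin k) {o : ℕ} (ho : o < ℓ i) :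
    deferredEntry ℓ A (blockStart ℓ i + o) = A i (blockStart ℓ i + o : ℕ) := by
  have hpos := finSigmaFinEquiv_apply_eq_blockStart_add ℓ i ⟨o, ho⟩
  rw [deferredEntry, dif_pos (hpos ▸ Fin.isLt _), finSigmaFinEquiv.symm_apply_eq.mpr (Fin.ext hpos.symm)]

lemma getD_columnCode {t : ℕ} (ht : t < ∑ i, ℓ i) :
    (columnCode ℓ A (t : Fin m)).getD (t / m) default = deferredEntry ℓ A t := by
  have hlt : t / m < (∑ i, ℓ i + m - 1) / m :=
    div_lt_add_sub_one_div (Nat.pos_of_neZero m) ht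
  rw [columnCode, List.getD_eq_getElem _ _ (by simpa using hlt), List.getElem_ofFn]
  simp only [Fin.val_natCast, Nat.div_add_mod]

lemma getD_rowCode (i : Fin k) {o : ℕ} (ho : ℓ i ≤ o) (hom : o < m) :
    (rowCode ℓ A i).getD (o - ℓ i) default = A i (blockStart ℓ i + o : ℕ) := by
  rw [rowCode, List.getD_eq_getElem _ _ (by simp; omega), List.getElem_ofFn,
    Nat.add_sub_cancel' ho]

theorem decode_rowCode_columnCode (i : Fin k) (j : Fin m) :
    decode ℓ i (rowCode ℓ A i) j (columnCode ℓ A j) = A i j := by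
  rw [decode]
  split_ifs with hdeferred
  · have ht : blockStart ℓ i + offset ℓ i j < ∑ i, ℓ i :=
      (finSigmaFinEquiv_apply_eq_blockStart_add ℓ i ⟨_, hdeferred⟩) ▸ Fin.isLt _
    have hcolumn := getD_columnCode ℓ A ht
    rw [cast_blockStart_add_offset] at hcolumn
    rw [hcolumn, deferredEntry_blockStart_add ℓ A i hdeferred, cast_blockStart_add_offset]
  · rw [getD_rowCode ℓ A i (not_lt.mp hdeferred) (offset_lt ℓ i j), cast_blockStart_add_offset]

end BipartiteLabeling

open BipartiteLabeling in
theorem stmt3_general (k m : ℕ) (hm : 1 ≤ m)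
    (ℓ : Fin k → ℕ) :
    ∃ D : Fin k → List Bool → Fin m → List Bool → Bool,
      ∀ A : Fin k → Fin m → Bool,
        ∃ (x : Fin k → List Bool) (y : Fin m → List Bool),
          (∀ i, (x i).length = m - ℓ i) ∧
          (∀ j, (y j).length = ((∑ i, ℓ i) + m - 1) / m) ∧
          ∀ i j, D i (x i) j (y j) = A i j := by
  have : NeZero m := ⟨by omega⟩
  exact ⟨decode ℓ, fun A => ⟨rowCode ℓ A, columnCode ℓ A, fun i => List.length_ofFn,
    fun j => List.length_ofFn, decode_rowCode_columnCode ℓ A⟩⟩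

theorem stmt3 (k m : ℕ) (hk : 1 ≤ k) (hm : 1 ≤ m)
    (ℓ : Fin k → ℕ) (hℓ : ∀ i, ℓ i ≤ m) :
    ∃ D : Fin k → List Bool → Fin m → List Bool → Bool,
      ∀ A : Fin k → Fin m → Bool,
        ∃ (x : Fin k → List Bool) (y : Fin m → List Bool),
          (∀ i, (x i).length = m - ℓ i) ∧
          (∀ j, (y j).length = ((∑ i, ℓ i) + m - 1) / m) ∧
          ∀ i j, D i (x i) j (y j) = A i j :=
  stmt3_general k m hm ℓ
end

section
/- Let k ≥ 1 and m ≥ 1, let ℓ_0, ..., ℓ_{k-1} be integers with 0 ≤ ℓ_i ≤ m for every i, and let 0 ≤ C ≤ m be an integer with (∑_{i=0}^{k-1} ℓ_i) + C ≥ 1. Set L = ⌈((∑_{i=0}^{k-1} ℓ_i) + C)/m⌉ - 1. Then there exists a decoding function D such that for every k×m Boolean matrix A = (a_{i,j}) there exist binary strings x_0, ..., x_{k-1} and y_0, ..., y_{m-1}, where x_i has length exactly m - ℓ_i, y_j has length exactly L when j < C and length exactly L + 1 when j ≥ C, satisfying D(i, x_i, j, y_j) = a_{i,j} for all i ∈ {0,...,k-1}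 and j ∈ {0,...,m-1}. -/
/-!
Lay blocks of ℓ_0, …, ℓ_{k-1} slots end to end on the slots C, C + 1, …, and file slot s in
column s % m at depth s / m; slot s of row i's block carries the bit A i (s % m). The string y_j
lists the bits of column j at the depths below ⌈(Σ ℓ_i + C) / m⌉, omitting depth 0 when j < C,
since that slot precedes every block. The string x_i lists row i in the cyclic column order
starting at its block, without the first ℓ_i columns. Knowing i, the decoder recomputes where the
block of row i starts and the cyclic offset r of column j from it: the bit sits in y_j if r < ℓ_i
and in x_i otherwise.
-/

open Finset

section PrefixSums

variable {ι : Type*} [LinearOrder ι] [LocallyFiniteOrderBot ι] (f : ι → ℕ)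

lemma sum_Iio_add_le_sum_Iio {i j : ι} (h : i < j) :
    ∑ x ∈ Iio i, f x + f i ≤ ∑ x ∈ Iio j, f x := by
  rw [sum_Iio_add_eq_sum_Iic]
  exact sum_le_sum_of_subset fun x hx => mem_Iio.2 ((mem_Iic.1 hx).trans_lt h)

lemma sum_Iio_add_le_sum [Fintype ι] (i : ι) : ∑ x ∈ Iio i, f x + f i ≤ ∑ x, f x := by
  rw [sum_Iio_add_eq_sum_Iic]
  exact sum_le_sum_of_subset (subset_univ _)

lemma eq_of_mem_Ico_sum_Iio {i j : ι} {s : ℕ}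
    (hi : s ∈ Ico (∑ x ∈ Iio i, f x) (∑ x ∈ Iio i, f x + f i))
    (hj : s ∈ Ico (∑ x ∈ Iio j, f x) (∑ x ∈ Iio j, f x + f j)) : i = j := by
  rw [mem_Ico] at hi hj
  rcases lt_trichotomy i j with h | h | h
  · have := sum_Iio_add_le_sum_Iio f h; omega
  · exact h
  · have := sum_Iio_add_le_sum_Iio f h; omega

end PrefixSums

section CyclicOffset

def cyclicOffset (m a : ℕ) (j : Fin m) : ℕ := ((List.finRange m).rotate a).idxOf j

lemma cyclicOffset_lt_length {m : ℕ} (a : ℕ) (j : Fin m) :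
    cyclicOffset m a j < ((List.finRange m).rotate a).length :=
  List.idxOf_lt_length_of_mem (by simp)

lemma cyclicOffset_lt {m : ℕ} (a : ℕ) (j : Fin m) : cyclicOffset m a j < m := by
  simpa using cyclicOffset_lt_length a j

lemma getElem_rotate_cyclicOffset {m : ℕ} (a : ℕ) (j : Fin m) :
    ((List.finRange m).rotate a)[cyclicOffset m a j]'(cyclicOffset_lt_length a j) = j :=
  List.getElem_idxOf _

lemma add_cyclicOffset_mod {m : ℕ} (a : ℕ) (j : Fin m) : (a + cyclicOffset m a j) % m = j := by
  have h := congrArg Fin.val (getElem_rotate_cyclicOffset a j)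
  rw [List.getElem_rotate] at h
  simpa [add_comm] using h

end CyclicOffset

lemma div_lt_ceil_div {m s n : ℕ} (hm : 0 < m) (hs : s < n) : s / m < (n + m - 1) / m := by
  rw [Nat.div_lt_iff_lt_mul hm]
  have := Nat.lt_div_mul_add (a := n + m - 1) hm
  omega

namespace BipartiteCode

def firstLayer (C j : ℕ) : ℕ := if j < C then 1 else 0

variable {k : ℕ} (C : ℕ) (ℓ : Fin k → ℕ)

def blockStart (i : Fin k) : ℕ := C + ∑ i' ∈ Iio i, ℓ i'

lemma blockStart_add_le (i : Fin k) : blockStart C ℓ i + ℓ i ≤ (∑ i, ℓ i) + C := by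
  have := sum_Iio_add_le_sum ℓ i
  simp only [blockStart]
  omega

def numLayers (m : ℕ) : ℕ := ((∑ i, ℓ i) + C + m - 1) / m

variable {m : ℕ} (A : Fin k → Fin m → Bool)

def slotBit (s : ℕ) (j : Fin m) : Bool :=
  decide (∃ i, s ∈ Ico (blockStart C ℓ i) (blockStart C ℓ i + ℓ i) ∧ A i j = true)

def rowCode (i : Fin k) : List Bool :=
  (((List.finRange m).rotate (blockStart C ℓ i)).drop (ℓ i)).map (A i)

def colCode (j : Fin m) : List Bool :=
  (List.range' (firstLayer C j) (numLayers C ℓ m - firstLayer C j)).map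
    fun q => slotBit C ℓ A (q * m + j) j

variable (m) in
def decode (i : Fin k) (xs : List Bool) (j : Fin m) (ys : List Bool) : Bool :=
  let r := cyclicOffset m (blockStart C ℓ i) j
  if r < ℓ i then ys.getD ((blockStart C ℓ i + r) / m - firstLayer C j) false
  else xs.getD (r - ℓ i) false

lemma length_rowCode (i : Fin k) : (rowCode C ℓ A i).length = m - ℓ i := by
  simp [rowCode]

lemma length_colCode (j : Fin m) :
    (colCode C ℓ A j).length = numLayers C ℓ m - firstLayer C j := by
  simp [colCode]

lemma slotBit_eq {s : ℕ} {i : Fin k} (hs : s ∈ Ico (blockStart C ℓ i) (blockStart C ℓ i + ℓ i))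
    (j : Fin m) : slotBit C ℓ A s j = A i j := by
  have hblock : ∀ i', s ∈ Ico (blockStart C ℓ i') (blockStart C ℓ i' + ℓ i') → i' = i := by
    intro i' hs'
    simp only [blockStart, mem_Ico] at hs hs'
    exact eq_of_mem_Ico_sum_Iio ℓ (s := s - C) (mem_Ico.2 (by omega)) (mem_Ico.2 (by omega))
  cases h : A i j
  · simp only [slotBit, decide_eq_false_iff_not, not_exists, not_and]
    intro i' hs'
    rw [hblock i' hs', h]
    simp
  · exact decide_eq_true ⟨i, hs, h⟩

lemma getD_colCode {j : Fin m} {q : ℕ} (h₁ : firstLayer C j ≤ q) (h₂ : q < numLayers C ℓ m) :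
    (colCode C ℓ A j).getD (q - firstLayer C j) false = slotBit C ℓ A (q * m + j) j := by
  rw [List.getD_eq_getElem _ _ (by rw [length_colCode]; omega)]
  simp only [colCode, List.getElem_map, List.getElem_range', one_mul, Nat.add_sub_cancel' h₁]

lemma decode_eq_of_lt (i : Fin k) (j : Fin m) (hr : cyclicOffset m (blockStart C ℓ i) j < ℓ i)
    (xs : List Bool) : decode C ℓ m i xs j (colCode C ℓ A j) = A i j := by
  have hm : 0 < m := j.pos
  simp only [decode, if_pos hr]
  set s := blockStart C ℓ i + cyclicOffset m (blockStart C ℓ i) j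
  have hsj : s % m = j := add_cyclicOffset_mod _ j
  have hs : s ∈ Ico (blockStart C ℓ i) (blockStart C ℓ i + ℓ i) := mem_Ico.2 ⟨by omega, by omega⟩
  have hlayer : s / m < numLayers C ℓ m :=
    div_lt_ceil_div hm ((mem_Ico.1 hs).2.trans_le (blockStart_add_le C ℓ i))
  have hfirst : firstLayer C j ≤ s / m := by
    unfold firstLayer
    split_ifs with hjC
    · -- the slot `j < C` at depth 0 lies before every block
      have hCs : C ≤ s := (Nat.le_add_right _ _).trans (mem_Ico.1 hs).1
      refine Nat.div_pos (not_lt.1 fun hsm => ?_) hm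
      rw [Nat.mod_eq_of_lt hsm] at hsj
      omega
    · exact Nat.zero_le _
  rw [getD_colCode C ℓ A hfirst hlayer, ← hsj, Nat.div_add_mod', slotBit_eq C ℓ A hs]

lemma decode_eq_of_le (i : Fin k) (j : Fin m) (hr : ℓ i ≤ cyclicOffset m (blockStart C ℓ i) j)
    (ys : List Bool) : decode C ℓ m i (rowCode C ℓ A i) j ys = A i j := by
  have hlt := cyclicOffset_lt (blockStart C ℓ i) j
  simp only [decode, if_neg (not_lt.2 hr)]
  rw [List.getD_eq_getElem _ _ (by rw [length_rowCode]; omega)]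
  simp only [rowCode, List.getElem_map, List.getElem_drop, Nat.add_sub_cancel' hr,
    getElem_rotate_cyclicOffset]

lemma decode_rowCode_colCode (i : Fin k) (j : Fin m) :
    decode C ℓ m i (rowCode C ℓ A i) j (colCode C ℓ A j) = A i j := by
  by_cases hr : cyclicOffset m (blockStart C ℓ i) j < ℓ i
  · exact decode_eq_of_lt C ℓ A i j hr _
  · exact decode_eq_of_le C ℓ A i j (not_lt.1 hr) _

end BipartiteCode

open BipartiteCode in
theorem stmt4_general (k m C : ℕ) (ℓ : Fin k → ℕ) :
    ∃ D : Fin k → List Bool → Fin m → List Bool → Bool,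
      ∀ A : Fin k → Fin m → Bool,
        ∃ (x : Fin k → List Bool) (y : Fin m → List Bool),
          (∀ i, (x i).length = m - ℓ i) ∧
          (∀ j : Fin m, (y j).length =
            if (j : ℕ) < C then ((∑ i, ℓ i) + C + m - 1) / m - 1
            else ((∑ i, ℓ i) + C + m - 1) / m) ∧
          ∀ i j, D i (x i) j (y j) = A i j := by
  refine ⟨decode C ℓ m, fun A => ⟨rowCode C ℓ A, colCode C ℓ A, length_rowCode C ℓ A,
    fun j => ?_, decode_rowCode_colCode C ℓ A⟩⟩
  rw [length_colCode, numLayers, firstLayer]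
  split_ifs <;> rfl

theorem stmt4 (k m C : ℕ) (hk : 1 ≤ k) (hm : 1 ≤ m)
    (ℓ : Fin k → ℕ) (hℓ : ∀ i, ℓ i ≤ m) (hC : C ≤ m)
    (hpos : 1 ≤ (∑ i, ℓ i) + C) :
    ∃ D : Fin k → List Bool → Fin m → List Bool → Bool,
      ∀ A : Fin k → Fin m → Bool,
        ∃ (x : Fin k → List Bool) (y : Fin m → List Bool),
          (∀ i, (x i).length = m - ℓ i) ∧
          (∀ j : Fin m, (y j).length =
            if (j : ℕ) < C then ((∑ i, ℓ i) + C + m - 1) / m - 1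
            else ((∑ i, ℓ i) + C + m - 1) / m) ∧
          ∀ i j, D i (x i) j (y j) = A i j :=
  stmt4_general k m C ℓ
end

section
/- For every n ≥ 1 there exist a function adj, assigning to each simple graph G on the vertex set [n] = {0,1,...,n-1} and each vertex u ∈ [n] a ⌊n/2⌋-bit string adj(G)(u), and a function D : ([n] × {0,1}^{⌊n/2⌋}) × ([n] × {0,1}^{⌊n/2⌋}) → {0,1}, such that for every simple graph G on [n] and all vertices u ≠ v, u and v are adjacent in G if and only if D((u, adj(G)(u)), (v, adj(G)(v))) = 1. -/
/-!
Place the vertices on a cycle and let `u` record its adjacency to the `⌊n/2⌋` vertices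
`u + 1, …, u + ⌊n/2⌋ (mod n)`. Two distinct vertices are at cyclic distance at most `⌊n/2⌋`
in one of the two directions, so one of them records the pair; the decoder reads the bit
from whichever tag that is.
-/

theorem exists_adjacency_labelling_of_covering {V : Type*} {k : ℕ} (nbr : V → Fin k → V)
    (hcover : ∀ u v, u ≠ v → (∃ i, nbr u i = v) ∨ ∃ i, nbr v i = u) :
    ∃ (adj : SimpleGraph V → V → Fin k → Bool)
      (D : V × (Fin k → Bool) → V × (Fin k → Bool) → Bool),
      ∀ (G : SimpleGraph V) (u v : V), u ≠ v →
        (G.Adj u v ↔ D (u, adj G u) (v, adj G v) = true) := by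
  classical
  refine ⟨fun G u i => decide (G.Adj u (nbr u i)), fun p q =>
    if h : ∃ i, nbr p.1 i = q.1 then p.2 h.choose
    else if h' : ∃ i, nbr q.1 i = p.1 then q.2 h'.choose else false, ?_⟩
  intro G u v huv
  by_cases h : ∃ i, nbr u i = v
  · simp [h, h.choose_spec]
  · have h' := (hcover u v huv).resolve_left h
    simp [h, h', h'.choose_spec, G.adj_comm]

namespace Fin

variable {n : ℕ}

theorem val_sub_add_val_sub {u v : Fin n} (hne : u ≠ v) : (v - u).val + (u - v).val = n := by
  have : NeZero n := .of_pos u.pos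
  have hpos : 0 < (u - v).val := Fin.pos_iff_ne_zero.mpr (sub_ne_zero.mpr hne)
  rw [← neg_sub, Fin.val_neg', Nat.mod_eq_of_lt (by omega)]
  omega

def cyclicForward (u : Fin n) (i : Fin (n / 2)) : Fin n :=
  u + ⟨i + 1, by omega⟩

theorem exists_cyclicForward_eq {u v : Fin n} (hne : u ≠ v) (hle : (v - u).val ≤ n / 2) :
    ∃ i, cyclicForward u i = v := by
  have : NeZero n := .of_pos u.pos
  have hpos : 0 < (v - u).val := Fin.pos_iff_ne_zero.mpr (sub_ne_zero.mpr hne.symm)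
  refine ⟨⟨(v - u).val - 1, by omega⟩, ?_⟩
  have hshift : (⟨(v - u).val - 1 + 1, by omega⟩ : Fin n) = v - u :=
    Fin.ext (Nat.sub_add_cancel hpos)
  rw [cyclicForward, hshift]
  exact add_sub_cancel u v

theorem exists_cyclicForward_eq_or {u v : Fin n} (hne : u ≠ v) :
    (∃ i, cyclicForward u i = v) ∨ ∃ i, cyclicForward v i = u := by
  have hsum := val_sub_add_val_sub hne
  by_cases hle : (v - u).val ≤ n / 2
  · exact .inl (exists_cyclicForward_eq hne hle)
  · exact .inr (exists_cyclicForward_eq hne.symm (by omega))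

end Fin

theorem stmt7_general (n : ℕ) :
    ∃ (adj : SimpleGraph (Fin n) → Fin n → (Fin (n / 2) → Bool))
      (D : (Fin n × (Fin (n / 2) → Bool)) → (Fin n × (Fin (n / 2) → Bool)) → Bool),
      ∀ (G : SimpleGraph (Fin n)) (u v : Fin n), u ≠ v →
        (G.Adj u v ↔ D (u, adj G u) (v, adj G v) = true) :=
  exists_adjacency_labelling_of_covering Fin.cyclicForward
    fun _ _ => Fin.exists_cyclicForward_eq_or

theorem stmt7 (n : ℕ) (hn : 1 ≤ n) :
    ∃ (adj : SimpleGraph (Fin n) → Fin n → (Fin (n / 2) → Bool))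
      (D : (Fin n × (Fin (n / 2) → Bool)) → (Fin n × (Fin (n / 2) → Bool)) → Bool),
      ∀ (G : SimpleGraph (Fin n)) (u v : Fin n), u ≠ v →
        (G.Adj u v ↔ D (u, adj G u) (v, adj G v) = true) :=
  stmt7_general n
end

section
/- Let n ≥ 2 be even and let r be an integer with 0 ≤ r < n/2, and set t = ⌈((n/2 - r)·(n/2 + r))/n⌉ (which equals ⌈n/4 - r²/n⌉). Then there exists a decoding function D such that for every (n/2 - r)×(n/2 + r) Boolean matrix A = (a_{i,j}) there exist t-bit strings x_0, ..., x_{n/2 - r - 1} and y_0, ..., y_{n/2 + r - 1} satisfying D(i, x_i, j, y_j) = a_{i,j} for all i ∈ {0,...,n/2 - r - 1} and j ∈ {0,...,n/2 + r - 1}. -/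
/-!
Give every vertex `t` bit slots and store each entry `a i j` in a slot of its row `i` or of its
column `j`, using no slot twice; since this slot assignment does not depend on `A`, the decoder
just reads entry `(i, j)` from its slot. Such an assignment is a matching in Hall's sense: a set of
entries meeting `a` rows and `b` columns has at most `a * b` elements and is offered
`t * (a + b)` slots, and `a * b ≤ t * (a + b)` holds because `a * b / (a + b)` is monotone in `a`
and `b`, while at `a = n/2 - r`, `b = n/2 + r` (so `a + b = n`) it is the choice of `t`.
-/

open Finset Fintype

theorem Nat.mul_le_mul_add_of_le_of_le {a b m₁ m₂ t : ℕ} (ha : a ≤ m₁) (hb : b ≤ m₂)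
    (h : m₁ * m₂ ≤ t * (m₁ + m₂)) : a * b ≤ t * (a + b) := by
  rcases Nat.eq_zero_or_pos (m₁ + m₂) with h0 | hpos
  · obtain rfl : a = 0 := by omega
    simp
  refine Nat.le_of_mul_le_mul_right ?_ hpos
  calc a * b * (m₁ + m₂) = a * b * m₁ + a * b * m₂ := by ring
    _ ≤ a * m₂ * m₁ + m₁ * b * m₂ := by gcongr
    _ = m₁ * m₂ * (a + b) := by ring
    _ ≤ t * (m₁ + m₂) * (a + b) := Nat.mul_le_mul_right _ h
    _ = t * (a + b) * (m₁ + m₂) := by ring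

section Storage

variable {α β τ : Type*} [DecidableEq α] [DecidableEq β] [Fintype τ]

/-- A slot is a vertex of `α ⊕ β` together with one of its `τ` bit positions. -/
def entrySlots (e : α × β) : Finset ((α ⊕ β) × τ) :=
  {Sum.inl e.1, Sum.inr e.2} ×ˢ univ

theorem exists_decoder_of_injective {γ : Type*} [Inhabited γ] (f : α × β → (α ⊕ β) × τ)
    (hf : Function.Injective f) (hslot : ∀ e, f e ∈ entrySlots e) :
    ∃ D : α → (τ → γ) → β → (τ → γ) → γ, ∀ A : α → β → γ,
      ∃ (x : α → τ → γ) (y : β → τ → γ), ∀ i j, D i (x i) j (y j) = A i j := by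
  refine ⟨fun i xi j yj => Sum.elim (fun _ => xi) (fun _ => yj) (f (i, j)).1 (f (i, j)).2,
    fun A => ?_⟩
  let g := Function.extend f (fun e => A e.1 e.2) (fun _ => default)
  refine ⟨fun i k => g (Sum.inl i, k), fun j k => g (Sum.inr j, k), fun i j => ?_⟩
  have hg : g (f (i, j)) = A i j := hf.extend_apply _ _ _
  have hv := (mem_product.1 (hslot (i, j))).1
  dsimp only
  rcases hfij : f (i, j) with ⟨v, k⟩
  rw [hfij] at hg hv
  simp only [mem_insert, mem_singleton] at hv
  rcases hv with rfl | rfl <;> exact hg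

theorem card_le_card_biUnion_entrySlots [Fintype α] [Fintype β] [DecidableEq τ]
    (hcount : card α * card β ≤ card τ * (card α + card β)) (s : Finset (α × β)) :
    #s ≤ #(s.biUnion (entrySlots (τ := τ))) := by
  set L := s.image Prod.fst
  set R := s.image Prod.snd
  calc #s ≤ #(L ×ˢ R) := card_le_card subset_product
    _ ≤ card τ * (#L + #R) := by
        rw [card_product]
        exact Nat.mul_le_mul_add_of_le_of_le (card_le_univ L) (card_le_univ R) hcount
    _ = #(L.disjSum R ×ˢ (univ : Finset τ)) := by
        rw [card_product, card_disjSum, card_univ, mul_comm]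
    _ ≤ #(s.biUnion entrySlots) := card_le_card ?_
  rintro ⟨v, k⟩ hv
  simp only [mem_product, mem_disjSum, mem_image, mem_univ, and_true, L, R] at hv
  simp only [mem_biUnion, entrySlots, mem_product, mem_insert, mem_singleton, mem_univ, and_true]
  rcases hv with ⟨_, ⟨e, he, rfl⟩, rfl⟩ | ⟨_, ⟨e, he, rfl⟩, rfl⟩
  · exact ⟨e, he, Or.inl rfl⟩
  · exact ⟨e, he, Or.inr rfl⟩

end Storage

theorem exists_decoder_of_card_mul_le {α β τ γ : Type*} [Fintype α] [Fintype β] [Fintype τ]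
    [Inhabited γ] (hcount : card α * card β ≤ card τ * (card α + card β)) :
    ∃ D : α → (τ → γ) → β → (τ → γ) → γ, ∀ A : α → β → γ,
      ∃ (x : α → τ → γ) (y : β → τ → γ), ∀ i j, D i (x i) j (y j) = A i j := by
  classical
  obtain ⟨f, hf, hslot⟩ := (all_card_le_biUnion_card_iff_exists_injective entrySlots).1
    (card_le_card_biUnion_entrySlots hcount)
  exact exists_decoder_of_injective f hf hslot

theorem stmt11_general (n r : ℕ) (heven : Even n) :
    ∃ D : Fin (n / 2 - r) → (Fin (((n / 2 - r) * (n / 2 + r) + n - 1) / n) → Bool) →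
          Fin (n / 2 + r) → (Fin (((n / 2 - r) * (n / 2 + r) + n - 1) / n) → Bool) →
          Bool,
      ∀ A : Fin (n / 2 - r) → Fin (n / 2 + r) → Bool,
        ∃ (x : Fin (n / 2 - r) → (Fin (((n / 2 - r) * (n / 2 + r) + n - 1) / n) → Bool))
          (y : Fin (n / 2 + r) → (Fin (((n / 2 - r) * (n / 2 + r) + n - 1) / n) → Bool)),
          ∀ (i : Fin (n / 2 - r)) (j : Fin (n / 2 + r)),
            D i (x i) j (y j) = A i j := by
  have hcount : (n / 2 - r) * (n / 2 + r) ≤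
      ((n / 2 - r) * (n / 2 + r) + n - 1) / n * (n / 2 - r + (n / 2 + r)) := by
    rcases Nat.eq_zero_or_pos (n / 2 - r) with h0 | hpos
    · simp [h0]
    have hsum : n / 2 - r + (n / 2 + r) = n := by
      obtain ⟨k, rfl⟩ := heven
      omega
    rw [hsum]
    have hceil := le_smul_ceilDiv (b := (n / 2 - r) * (n / 2 + r)) (show 0 < n by omega)
    rwa [Nat.ceilDiv_eq_add_pred_div, smul_eq_mul, mul_comm n] at hceil
  exact exists_decoder_of_card_mul_le (by simpa only [Fintype.card_fin] using hcount)

theorem stmt11 (n r : ℕ) (hn : 2 ≤ n) (heven : Even n) (hr : r < n / 2) :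
    ∃ D : Fin (n / 2 - r) → (Fin (((n / 2 - r) * (n / 2 + r) + n - 1) / n) → Bool) →
          Fin (n / 2 + r) → (Fin (((n / 2 - r) * (n / 2 + r) + n - 1) / n) → Bool) →
          Bool,
      ∀ A : Fin (n / 2 - r) → Fin (n / 2 + r) → Bool,
        ∃ (x : Fin (n / 2 - r) → (Fin (((n / 2 - r) * (n / 2 + r) + n - 1) / n) → Bool))
          (y : Fin (n / 2 + r) → (Fin (((n / 2 - r) * (n / 2 + r) + n - 1) / n) → Bool)),
          ∀ (i : Fin (n / 2 - r)) (j : Fin (n / 2 + r)),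
            D i (x i) j (y j) = A i j :=
  stmt11_general n r heven
end

section
/- Let n ≥ 1 and L ≥ 0, and suppose a family F of simple graphs on [n] = {0,1,...,n-1} admits an indexing L-bit adjacency labeling scheme. Then |F| · n^n ≤ n! · 2^{nL} (equivalently, L ≥ (1/n)·log₂|F| + (1/n)·log₂(n^n/n!) when F is nonempty). -/
/-!
An adjacency labeling determines its graph, so `G ↦ Label G` is injective on `F`, with values
among the labelings `ℓ : [n] → {0,1}^L` for which `Ind ∘ ℓ` is a bijection. Such a labeling
amounts to a permutation `σ = Ind ∘ ℓ` together with a label in the fibre `Ind⁻¹(i)` for every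
index `i`, so there are `n! ∏ᵢ mᵢ` of them, where the fibre sizes `mᵢ` sum to `2^L`. By AM-GM,
`n^n ∏ᵢ mᵢ ≤ (∑ᵢ mᵢ)^n = 2^(nL)`.
-/

open Finset Function

theorem NNReal.card_pow_card_mul_prod_le_sum_pow {ι : Type*} (s : Finset ι) (z : ι → NNReal) :
    (#s : NNReal) ^ #s * ∏ i ∈ s, z i ≤ (∑ i ∈ s, z i) ^ #s := by
  rcases s.eq_empty_or_nonempty with rfl | hs
  · simp
  have hcard : (#s : NNReal) ≠ 0 := by simpa using hs.card_pos.ne'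
  have hroot : ∀ i, (z i ^ (#s : ℝ)⁻¹) ^ #s = z i := fun i => by
    rw [← NNReal.rpow_natCast, ← NNReal.rpow_mul, inv_mul_cancel₀ (by exact_mod_cast hcard),
      NNReal.rpow_one]
  have amgm := NNReal.geom_mean_le_arith_mean_weighted s (fun _ => (#s : NNReal)⁻¹) z
    (by simp [hcard])
  push_cast at amgm
  calc (#s : NNReal) ^ #s * ∏ i ∈ s, z i
      = (#s : NNReal) ^ #s * (∏ i ∈ s, z i ^ (#s : ℝ)⁻¹) ^ #s := by
        simp only [← prod_pow, hroot]
    _ ≤ (#s : NNReal) ^ #s * (∑ i ∈ s, (#s : NNReal)⁻¹ * z i) ^ #s := by gcongr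
    _ = (∑ i ∈ s, z i) ^ #s := by
        rw [← mul_sum, ← mul_pow, mul_inv_cancel_left₀ hcard]

theorem Nat.card_pow_card_mul_prod_le_sum_pow {ι : Type*} (s : Finset ι) (f : ι → ℕ) :
    #s ^ #s * ∏ i ∈ s, f i ≤ (∑ i ∈ s, f i) ^ #s := by
  exact_mod_cast NNReal.card_pow_card_mul_prod_le_sum_pow s (fun i => (f i : NNReal))

variable {α X : Type*}

noncomputable def bijectiveCompEquiv (f : X → α) :
    {ℓ : α → X // Bijective (f ∘ ℓ)} ≃ Equiv.Perm α × ∀ a, {x // f x = a} where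
  toFun ℓ :=
    let σ := Equiv.ofBijective _ ℓ.2
    (σ, fun a => ⟨ℓ.1 (σ.symm a), σ.apply_symm_apply a⟩)
  invFun p := ⟨fun a => p.2 (p.1 a), by
    convert p.1.bijective using 1
    funext a
    exact (p.2 (p.1 a)).2⟩
  left_inv ℓ := Subtype.ext <| funext fun a =>
    congrArg ℓ.1 ((Equiv.ofBijective _ ℓ.2).symm_apply_apply a)
  right_inv := by
    rintro ⟨σ, s⟩
    dsimp only
    generalize_proofs hb
    have hσ : Equiv.ofBijective _ hb = σ := Equiv.ext fun a => (s (σ a)).2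
    refine Prod.ext hσ (funext fun a => Subtype.ext ?_)
    dsimp only
    rw [hσ, Equiv.apply_symm_apply]

theorem Nat.card_bijective_comp [Fintype α] (f : X → α) :
    Nat.card {ℓ : α → X // Bijective (f ∘ ℓ)} =
      (Nat.card α).factorial * ∏ a, Nat.card {x // f x = a} := by
  rw [Nat.card_congr (bijectiveCompEquiv f), Nat.card_prod, Nat.card_perm, Nat.card_pi]

theorem Nat.sum_card_fiber [Fintype α] [Finite X] (f : X → α) :
    ∑ a, Nat.card {x // f x = a} = Nat.card X := by
  rw [← Nat.card_sigma, Nat.card_congr (Equiv.sigmaFiberEquiv f)]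

theorem Nat.card_pow_card_mul_card_bijective_comp_le [Fintype α] [Finite X] (f : X → α) :
    Nat.card α ^ Nat.card α * Nat.card {ℓ : α → X // Bijective (f ∘ ℓ)} ≤
      (Nat.card α).factorial * Nat.card X ^ Nat.card α := by
  have amgm := Nat.card_pow_card_mul_prod_le_sum_pow univ fun a => Nat.card {x // f x = a}
  rw [Finset.card_univ, ← Nat.card_eq_fintype_card, Nat.sum_card_fiber] at amgm
  rw [Nat.card_bijective_comp, mul_left_comm]
  exact Nat.mul_le_mul_left _ amgm

def IsAdjLabeling {V Λ : Type*} (F : Set (SimpleGraph V)) (Label : SimpleGraph V → V → Λ)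
    (Edge : Λ → Λ → Bool) : Prop :=
  ∀ G ∈ F, ∀ u v, u ≠ v → (G.Adj u v ↔ Edge (Label G u) (Label G v) = true)

theorem IsAdjLabeling.injOn {V Λ : Type*} {F : Set (SimpleGraph V)}
    {Label : SimpleGraph V → V → Λ} {Edge : Λ → Λ → Bool} (h : IsAdjLabeling F Label Edge) :
    Set.InjOn Label F := by
  intro G hG G' hG' hLabel
  ext u v
  rcases eq_or_ne u v with rfl | huv
  · simp
  · rw [h G hG u v huv, h G' hG' u v huv, hLabel]

theorem stmt17_general (n L : ℕ) (F : Set (SimpleGraph (Fin n)))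
    (Label : SimpleGraph (Fin n) → Fin n → (Fin L → Bool))
    (Edge : (Fin L → Bool) → (Fin L → Bool) → Bool)
    (Ind : (Fin L → Bool) → Fin n)
    (hscheme : ∀ G ∈ F, ∀ u v : Fin n, u ≠ v →
      (SimpleGraph.Adj G u v ↔ Edge (Label G u) (Label G v) = true))
    (hind : ∀ G ∈ F, Function.Bijective fun u : Fin n => Ind (Label G u)) :
    F.ncard * n ^ n ≤ Nat.factorial n * 2 ^ (n * L) := by
  have hF : F.ncard ≤ Nat.card {ℓ : Fin n → Fin L → Bool // Bijective (Ind ∘ ℓ)} :=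
    Set.ncard_le_ncard_of_injOn Label hind (IsAdjLabeling.injOn hscheme)
  have hcount := Nat.card_pow_card_mul_card_bijective_comp_le Ind
  rw [Nat.card_fun, Nat.card_fin, Nat.card_fin, Nat.card_eq_fintype_card (α := Bool),
    Fintype.card_bool] at hcount
  calc F.ncard * n ^ n
      ≤ n ^ n * Nat.card {ℓ : Fin n → Fin L → Bool // Bijective (Ind ∘ ℓ)} := by
        rw [mul_comm]; exact Nat.mul_le_mul_left _ hF
    _ ≤ n.factorial * (2 ^ L) ^ n := hcount
    _ = n.factorial * 2 ^ (n * L) := by rw [← pow_mul, mul_comm L]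

theorem stmt17 (n L : ℕ) (hn : 1 ≤ n) (F : Set (SimpleGraph (Fin n)))
    (Label : SimpleGraph (Fin n) → Fin n → (Fin L → Bool))
    (Edge : (Fin L → Bool) → (Fin L → Bool) → Bool)
    (Ind : (Fin L → Bool) → Fin n)
    (hscheme : ∀ G ∈ F, ∀ u v : Fin n, u ≠ v →
      (SimpleGraph.Adj G u v ↔ Edge (Label G u) (Label G v) = true))
    (hind : ∀ G ∈ F, Function.Bijective fun u : Fin n => Ind (Label G u)) :
    F.ncard * n ^ n ≤ Nat.factorial n * 2 ^ (n * L) :=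
  stmt17_general n L F Label Edge Ind hscheme hind
end
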